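/- For every function f : 𝔹^n → 𝔹^n, the chaotic-iterations dynamical system G̃_f is chaotic according to Devaney on (X̃, d) (i.e., its periodic points are dense in X̃ and it is topologically transitive) if and only if the graph of iterations Γ(f) is strongly connected. -/

import Mathlib

open scoped BigOperators

namespace CI

/-- A Boolean state of a system of `n` cells. -/
abbrev BVec (n : ℕ) := Fin n → Bool

open Classical in
/-- `δ(a,b) = 0` if `a = b`, `1` otherwise. -/
noncomputable def delta {α : Type*} (a b : α) : ℝ := if a = b then 0 else 1

/-- `F_f(k,E)` updates the `k`-th coordinate of `E` to `f(E)_k`. -/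
def Ff (n : ℕ) (f : BVec n → BVec n) (k : Fin n) (E : BVec n) : BVec n :=
  fun j => if j = k then f E k else E j

/-- Arc of the graph of iterations `Γ(f)`: from `x` to the vector obtained by
negating the `i`-th coordinate of `x`, whenever `F_f(i,x)` equals that vector. -/
def arc (n : ℕ) (f : BVec n → BVec n) (x y : BVec n) : Prop :=
  ∃ i : Fin n, y = Function.update x i (!x i) ∧ Ff n f i x = y

/-- `Γ(f)` is strongly connected: every vertex is reachable from every vertex. -/
def stronglyConnected (n : ℕ) (f : BVec n → BVec n) : Prop :=
  ∀ x y : BVec n, Relation.ReflTransGen (arc n f) x y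

/-- The chaotic-iterations dynamics `G̃_f(S,E) = (σ(S), F_f(S^0,E))` on
`X̃ = ⟦1,n⟧^ℕ × 𝔹^n` (strategies are encoded by `ℕ → Fin n`, the value
`S k : Fin n` standing for the integer `(S k) + 1 ∈ ⟦1,n⟧`). -/
def GCI (n : ℕ) (f : BVec n → BVec n) :
    (ℕ → Fin n) × BVec n → (ℕ → Fin n) × BVec n :=
  fun X => (fun k => X.1 (k + 1), Ff n f (X.1 0) X.2)

/-- The distance `d((S,E),(Š,Ě)) = Σ_{k=1}^n δ(E_k,Ě_k)
 + (9/n)·Σ_{k=0}^∞ |S^k − Š^k|/10^{k+1}` on `X̃`. -/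
noncomputable def dCI (n : ℕ) (X Y : (ℕ → Fin n) × BVec n) : ℝ :=
  (∑ k : Fin n, delta (X.2 k) (Y.2 k)) +
    (9 / (n : ℝ)) *
      ∑' k : ℕ, |(((X.1 k : ℕ) : ℝ) + 1) - (((Y.1 k : ℕ) : ℝ) + 1)| / 10 ^ (k + 1)

/-- The periodic points of `G̃_f` are dense in `(X̃, d)`. -/
def densePeriodic (n : ℕ) (f : BVec n → BVec n) : Prop :=
  ∀ X : (ℕ → Fin n) × BVec n, ∀ ε > (0 : ℝ),
    ∃ Y, dCI n X Y < ε ∧ ∃ m : ℕ, 1 ≤ m ∧ (GCI n f)^[m] Y = Y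

/-- `G̃_f` is topologically transitive on `(X̃, d)`. -/
def topTransitive (n : ℕ) (f : BVec n → BVec n) : Prop :=
  ∀ U V : Set ((ℕ → Fin n) × BVec n),
    (∀ x ∈ U, ∃ ε > (0 : ℝ), ∀ y, dCI n x y < ε → y ∈ U) → U.Nonempty →
    (∀ x ∈ V, ∃ ε > (0 : ℝ), ∀ y, dCI n x y < ε → y ∈ V) → V.Nonempty →
    ∃ x ∈ U, ∃ k : ℕ, 0 < k ∧ (GCI n f)^[k] x ∈ V

/-- Devaney's chaos: regularity (dense periodic points) plus topological transitivity. -/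
def devaneyChaotic (n : ℕ) (f : BVec n → BVec n) : Prop :=
  densePeriodic n f ∧ topTransitive n f

/-! The state component of an orbit of `G̃_f` only moves along arcs of `Γ(f)`, so transitivity
between the open sets `{E = x}` and `{E = y}` yields a path from `x` to `y`. Conversely, two
points are `(1/10)^N`-close as soon as they share the state and the first `N` strategy terms.
Strong connectivity lets us extend any such prefix by a word steering the state to a prescribed
target; continuing with the strategy of a target point gives transitivity, and repeating the
whole word forever, with the initial state as target, gives a nearby periodic point. -/

end CI

theorem Stream'.get_take_append_append_stream {α : Type*} (s T : Stream' α) (l : List α)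
    {N k : ℕ} (hk : k < N) : (Stream'.take N s ++ l ++ₛ T).get k = s.get k := by
  have hk' : k < (Stream'.take N s).length := by rwa [Stream'.length_take]
  rw [Stream'.append_append_stream, Stream'.get_append_left k _ _ hk', Stream'.take_get]

theorem hasSum_mul_one_div_ten_pow (c : ℝ) (N : ℕ) :
    HasSum (fun k => c * (1 / 10 : ℝ) ^ (k + N + 1)) (c * (1 / 10) ^ N / 9) := by
  have h := (hasSum_geometric_of_lt_one (r := (1 / 10 : ℝ)) (by norm_num) (by norm_num)).mul_left
    (c * (1 / 10) ^ (N + 1))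
  rw [show c * (1 / 10) ^ (N + 1) * (1 - 1 / 10)⁻¹ = c * (1 / 10) ^ N / 9 by ring] at h
  rwa [show (fun k => c * (1 / 10 : ℝ) ^ (k + N + 1)) =
    fun k => c * (1 / 10) ^ (N + 1) * (1 / 10) ^ k from funext fun k => by ring]

namespace CI

open Relation

variable {n : ℕ} (f : BVec n → BVec n)

def applyUpdates (l : List (Fin n)) (E : BVec n) : BVec n :=
  l.foldl (fun E i => Ff n f i E) E

theorem applyUpdates_append (l₁ l₂ : List (Fin n)) (E : BVec n) :
    applyUpdates f (l₁ ++ l₂) E = applyUpdates f l₂ (applyUpdates f l₁ E) :=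
  List.foldl_append

theorem Ff_eq_update (i : Fin n) (E : BVec n) : Ff n f i E = Function.update E i (f E i) := by
  funext j
  simp only [Ff, Function.update_apply]

theorem reflTransGen_arc_Ff (i : Fin n) (E : BVec n) : ReflTransGen (arc n f) E (Ff n f i E) := by
  rw [Ff_eq_update]
  by_cases h : f E i = E i
  · rw [h, Function.update_eq_self]
  · have hflip : f E i = !E i := Bool.eq_not_iff.mpr h
    exact .single ⟨i, by rw [hflip], by rw [Ff_eq_update]⟩

theorem reflTransGen_arc_iterate_GCI (X : (ℕ → Fin n) × BVec n) (k : ℕ) :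
    ReflTransGen (arc n f) X.2 ((GCI n f)^[k] X).2 := by
  induction k with
  | zero => exact .refl
  | succ k ih =>
    rw [Function.iterate_succ_apply']
    exact ih.trans (reflTransGen_arc_Ff f _ _)

theorem exists_applyUpdates_eq_of_reflTransGen {x y : BVec n} (h : ReflTransGen (arc n f) x y) :
    ∃ l, applyUpdates f l x = y := by
  induction h using ReflTransGen.head_induction_on with
  | refl => exact ⟨[], rfl⟩
  | head hstep _ ih =>
    obtain ⟨l, hl⟩ := ih
    obtain ⟨i, -, hi⟩ := hstep
    exact ⟨i :: l, by simp [applyUpdates, hi, ← hl]⟩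

theorem iterate_GCI_append_stream (l : List (Fin n)) (T : ℕ → Fin n) (E : BVec n) :
    (GCI n f)^[l.length] (l ++ₛ T, E) = (T, applyUpdates f l E) := by
  induction l generalizing E with
  | nil => rfl
  | cons i l ih => exact ih (Ff n f i E)

theorem state_eq_of_dCI_lt_one {X Y : (ℕ → Fin n) × BVec n} (h : dCI n X Y < 1) :
    X.2 = Y.2 := by
  funext j
  by_contra hj
  have hδ : ∀ k, 0 ≤ delta (X.2 k) (Y.2 k) := fun k => by unfold delta; split <;> norm_num
  have hsum : 1 ≤ ∑ k : Fin n, delta (X.2 k) (Y.2 k) := by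
    simpa [delta, hj] using Finset.single_le_sum (fun k _ => hδ k) (Finset.mem_univ j)
  have htail : 0 ≤ (9 / (n : ℝ)) *
      ∑' k : ℕ, |(((X.1 k : ℕ) : ℝ) + 1) - (((Y.1 k : ℕ) : ℝ) + 1)| / 10 ^ (k + 1) := by
    positivity
  unfold dCI at h
  linarith

theorem dCI_le_of_forall_lt {S T : ℕ → Fin n} {E : BVec n} {N : ℕ}
    (hS : ∀ k < N, S k = T k) : dCI n (S, E) (T, E) ≤ (1 / 10) ^ N := by
  have hn : (0 : ℝ) < n := Nat.cast_pos.mpr (S 0).pos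
  set g : ℕ → ℝ := fun k =>
    |(((S k : ℕ) : ℝ) + 1) - (((T k : ℕ) : ℝ) + 1)| / 10 ^ (k + 1)
  have hg_le : ∀ k, g k ≤ n * (1 / 10) ^ (k + 1) := fun k => by
    have hSk : ((S k : ℕ) : ℝ) < n := by exact_mod_cast (S k).2
    have hTk : ((T k : ℕ) : ℝ) < n := by exact_mod_cast (T k).2
    have habs : |(((S k : ℕ) : ℝ) + 1) - (((T k : ℕ) : ℝ) + 1)| ≤ n := by
      rw [abs_sub_le_iff]; constructor <;> linarith [(S k : ℕ).cast_nonneg (α := ℝ),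
        (T k : ℕ).cast_nonneg (α := ℝ)]
    simpa [g, div_eq_mul_inv] using mul_le_mul_of_nonneg_right habs (by positivity :
      (0 : ℝ) ≤ (10 ^ (k + 1))⁻¹)
  have hg : Summable g :=
    .of_nonneg_of_le (fun k => by positivity) hg_le (hasSum_mul_one_div_ten_pow n 0).summable
  have htail : ∑' k, g k ≤ n * (1 / 10) ^ N / 9 := by
    rw [← hg.sum_add_tsum_nat_add N, Finset.sum_eq_zero fun k hk => by
      simp [g, hS k (Finset.mem_range.mp hk)], zero_add]
    exact hasSum_le (fun k => by simpa [add_right_comm] using hg_le (k + N))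
      (hg.comp_injective (add_left_injective N)).hasSum (hasSum_mul_one_div_ten_pow n N)
  have hstate : ∑ k : Fin n, delta (E k) (E k) = 0 := by simp [delta]
  calc dCI n (S, E) (T, E) = 9 / n * ∑' k, g k := by rw [dCI, hstate, zero_add]
    _ ≤ 9 / n * (n * (1 / 10) ^ N / 9) := by gcongr
    _ = (1 / 10) ^ N := by field_simp

theorem exists_applyUpdates_take_append_eq (hsc : stronglyConnected n f) (s : ℕ → Fin n)
    (N : ℕ) (E y : BVec n) : ∃ l, applyUpdates f (Stream'.take N s ++ l) E = y := by
  obtain ⟨l, hl⟩ :=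
    exists_applyUpdates_eq_of_reflTransGen f (hsc (applyUpdates f (Stream'.take N s) E) y)
  exact ⟨l, by rw [applyUpdates_append, hl]⟩

theorem densePeriodic_of_stronglyConnected (hsc : stronglyConnected n f) : densePeriodic n f := by
  intro X ε hε
  obtain ⟨N, hN⟩ := exists_pow_lt_of_lt_one hε (by norm_num : (1 / 10 : ℝ) < 1)
  -- a prefix of length `N + 1` rather than `N` keeps the period positive
  obtain ⟨l, hl⟩ := exists_applyUpdates_take_append_eq f hsc X.1 (N + 1) X.2 X.2
  set B := Stream'.take (N + 1) X.1 ++ l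
  have hB : B ≠ [] := List.ne_nil_of_length_pos (by simp [B, Stream'.length_take (N + 1) X.1])
  refine ⟨(Stream'.cycle B hB, X.2), (dCI_le_of_forall_lt fun k hk => ?_).trans_lt hN,
    B.length, List.length_pos_iff.mpr hB, ?_⟩
  · rw [Stream'.cycle_eq]
    exact (Stream'.get_take_append_append_stream _ _ _ (hk.trans N.lt_succ_self)).symm
  · have h := iterate_GCI_append_stream f B (Stream'.cycle B hB) X.2
    rwa [← Stream'.cycle_eq, hl] at h

theorem topTransitive_of_stronglyConnected (hsc : stronglyConnected n f) : topTransitive n f := by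
  intro U V hU ⟨X, hX⟩ _ ⟨Y, hY⟩
  obtain ⟨ε, hε, hball⟩ := hU X hX
  obtain ⟨N, hN⟩ := exists_pow_lt_of_lt_one hε (by norm_num : (1 / 10 : ℝ) < 1)
  obtain ⟨l, hl⟩ := exists_applyUpdates_take_append_eq f hsc X.1 (N + 1) X.2 Y.2
  set B := Stream'.take (N + 1) X.1 ++ l
  refine ⟨(B ++ₛ Y.1, X.2), hball _ ((dCI_le_of_forall_lt fun k hk => ?_).trans_lt hN),
    B.length, by simp [B, Stream'.length_take (N + 1) X.1], ?_⟩
  · exact (Stream'.get_take_append_append_stream _ _ _ (hk.trans N.lt_succ_self)).symm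
  · rwa [iterate_GCI_append_stream, hl]

theorem exists_ball_subset_setOf_snd_eq (x : BVec n) :
    ∀ Z ∈ {Z : (ℕ → Fin n) × BVec n | Z.2 = x},
      ∃ ε > (0 : ℝ), ∀ W, dCI n Z W < ε → W ∈ {Z | Z.2 = x} :=
  fun _ hZ => ⟨1, one_pos, fun _ hW => (state_eq_of_dCI_lt_one hW).symm.trans hZ⟩

theorem stronglyConnected_of_topTransitive (h : topTransitive n f) : stronglyConnected n f := by
  intro x y
  cases isEmpty_or_nonempty (Fin n) with
  | inl => rw [Subsingleton.elim x y]
  | inr hne =>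
    obtain ⟨i⟩ := hne
    obtain ⟨Z, rfl, k, -, rfl⟩ := h _ _
      (exists_ball_subset_setOf_snd_eq x) ⟨(fun _ => i, x), rfl⟩
      (exists_ball_subset_setOf_snd_eq y) ⟨(fun _ => i, y), rfl⟩
    exact reflTransGen_arc_iterate_GCI f Z k

theorem devaney_iff_strongly_connected_general (n : ℕ)
    (f : BVec n → BVec n) :
    devaneyChaotic n f ↔ stronglyConnected n f :=
  ⟨fun h => stronglyConnected_of_topTransitive f h.2, fun hsc =>
    ⟨densePeriodic_of_stronglyConnected f hsc, topTransitive_of_stronglyConnected f hsc⟩⟩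

/-- for every `f : 𝔹^n → 𝔹^n`, the chaotic-iterations system
`G̃_f` is chaotic according to Devaney on `(X̃, d)` if and only if the graph
of iterations `Γ(f)` is strongly connected. -/
theorem devaney_iff_strongly_connected (n : ℕ) (hn : 1 ≤ n)
    (f : BVec n → BVec n) :
    devaneyChaotic n f ↔ stronglyConnected n f :=
  devaney_iff_strongly_connected_general n f

end CI
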